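/- arXiv:2007.06455 — 7 statements merged into one kernel-verified Lean document; each statement's English description precedes it below -/
import Mathlib

section
/- A colouring φ: V(G) → ℕ of a graph G is an ℓ-ranking of G if and only if, for every induced path u₀,…,u_p in G of length at most ℓ (p ≥ 1), either φ(u₀) ≠ φ(u_p) or φ(u₀) < max{φ(u₀),…,φ(u_p)}. -/
/-!
A path with a chord `ab` can be shortcut along that chord to a strictly shorter walk between
the same endpoints on a subset of its vertices; making that walk a path again and repeating,
every path contains an induced path with the same endpoints on a subset of its vertices and of
no greater length. A vertex of larger colour on that induced path also lies on the original
path, so the ranking condition transfers.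
-/

open SimpleGraph

variable {V : Type*}

def IsLRanking (G : SimpleGraph V) (ℓ : ℕ) (φ : V → ℕ) : Prop :=
  ∀ ⦃u v : V⦄ (p : G.Walk u v), p.IsPath → 1 ≤ p.length → p.length ≤ ℓ →
    φ u ≠ φ v ∨ ∃ w ∈ p.support, φ u < φ w

def IsInducedPath (G : SimpleGraph V) {u v : V} (p : G.Walk u v) : Prop :=
  p.IsPath ∧ ∀ a b : V, a ∈ p.support → b ∈ p.support → G.Adj a b → s(a, b) ∈ p.edges

namespace SimpleGraph.Walk

variable {G : SimpleGraph V}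

theorem two_le_length_of_adj_of_not_mem_edges {a b : V} (q : G.Walk a b) (hab : G.Adj a b)
    (hq : s(a, b) ∉ q.edges) : 2 ≤ q.length := by
  match q with
  | nil => exact absurd rfl hab.ne
  | cons _ nil => simp at hq
  | cons _ (cons _ _) => simp

theorem exists_shorter_of_append_append {u a b v : V} (p : G.Walk u a) (q : G.Walk a b)
    (r : G.Walk b v) (hab : G.Adj a b) (hq : s(a, b) ∉ q.edges) :
    ∃ w : G.Walk u v, w.support ⊆ (p.append (q.append r)).support ∧
      w.length < (p.append (q.append r)).length := by
  refine ⟨p.append (cons hab r), ?_, ?_⟩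
  · intro x hx
    simp only [mem_support_append_iff, support_cons, List.mem_cons] at hx ⊢
    rcases hx with hx | rfl | hx
    · exact .inl hx
    · exact .inr (.inl q.start_mem_support)
    · exact .inr (.inr hx)
  · have := q.two_le_length_of_adj_of_not_mem_edges hab hq
    simp only [length_append, length_cons]
    omega

theorem exists_shorter_of_chord {u v a b : V} (p : G.Walk u v) (ha : a ∈ p.support)
    (hb : b ∈ p.support) (hab : G.Adj a b) (hchord : s(a, b) ∉ p.edges) :
    ∃ w : G.Walk u v, w.support ⊆ p.support ∧ w.length < p.length := by
  obtain ⟨p₁, p₂, rfl⟩ := mem_support_iff_exists_append.mp ha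
  rw [edges_append, List.mem_append, not_or] at hchord
  rcases (mem_support_append_iff _ _).mp hb with hb | hb
  · obtain ⟨r₁, r₂, rfl⟩ := mem_support_iff_exists_append.mp hb
    rw [← append_assoc]
    refine r₁.exists_shorter_of_append_append r₂ p₂ hab.symm ?_
    rw [Sym2.eq_swap]
    exact fun h ↦ hchord.1 (by simp [h])
  · obtain ⟨q, r, rfl⟩ := mem_support_iff_exists_append.mp hb
    exact p₁.exists_shorter_of_append_append q r hab fun h ↦ hchord.2 (by simp [h])

theorem exists_isInducedPath_support_subset {u v : V} (p : G.Walk u v) :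
    ∃ q : G.Walk u v, IsInducedPath G q ∧ q.support ⊆ p.support ∧ q.length ≤ p.length := by
  classical
  by_cases hind : IsInducedPath G p.bypass
  · exact ⟨p.bypass, hind, p.support_bypass_subset_support, p.length_bypass_le_length⟩
  obtain ⟨a, b, ha, hb, hab, hchord⟩ : ∃ a b, a ∈ p.bypass.support ∧ b ∈ p.bypass.support ∧
      G.Adj a b ∧ s(a, b) ∉ p.bypass.edges := by
    simpa [IsInducedPath, p.bypass_isPath] using hind
  obtain ⟨w, hw_sub, hw_len⟩ := p.bypass.exists_shorter_of_chord ha hb hab hchord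
  have := p.length_bypass_le_length
  obtain ⟨q, hq, hq_sub, hq_len⟩ := w.exists_isInducedPath_support_subset
  exact ⟨q, hq, fun x hx ↦ p.support_bypass_subset_support (hw_sub (hq_sub hx)), by omega⟩
termination_by p.length
decreasing_by omega

end SimpleGraph.Walk

theorem induced_paths_only (G : SimpleGraph V) (ℓ : ℕ) (φ : V → ℕ) :
    IsLRanking G ℓ φ ↔
      ∀ ⦃u v : V⦄ (p : G.Walk u v), IsInducedPath G p → 1 ≤ p.length → p.length ≤ ℓ →
        φ u ≠ φ v ∨ ∃ w ∈ p.support, φ u < φ w := by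
  refine ⟨fun h u v p hp ↦ h p hp.1, fun h u v p hp hlen hℓ ↦ ?_⟩
  obtain ⟨q, hq, hq_sub, hq_len⟩ := p.exists_isInducedPath_support_subset
  have huv : u ≠ v := by
    rintro rfl
    have := Walk.length_eq_zero_iff.mpr (Walk.isPath_iff_nil.mp hp)
    omega
  have hq_pos : 1 ≤ q.length :=
    Nat.one_le_iff_ne_zero.mpr fun h0 ↦ huv (Walk.eq_of_length_eq_zero h0)
  rcases h q hq hq_pos (hq_len.trans hℓ) with hne | ⟨w, hw, hlt⟩
  · exact .inl hne
  · exact .inr ⟨w, hq_sub hw, hlt⟩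
end

section
/- For any two graphs G₁ and G₂ and any integer ℓ ≥ 1, the ℓ-ranking number of the strong product satisfies χ_ℓ(G₁ ⊠ G₂) ≤ χ_ℓ(G₁) · χ̄_ℓ(G₂), where χ̄_ℓ denotes the distance-ℓ colouring number. -/
open SimpleGraph

variable {V : Type*}

noncomputable def rankingNumber (G : SimpleGraph V) (ℓ : ℕ) : ℕ :=
  sInf {k | ∃ φ : V → ℕ, IsLRanking G ℓ φ ∧ ∀ v, φ v ∈ Finset.Icc 1 k}

/-- A distance-`ℓ` colouring: endpoints of every non-trivial path of length at most `ℓ`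
receive distinct colours. -/
def IsDistColoring (G : SimpleGraph V) (ℓ : ℕ) (φ : V → ℕ) : Prop :=
  ∀ ⦃u v : V⦄ (p : G.Walk u v), p.IsPath → 1 ≤ p.length → p.length ≤ ℓ → φ u ≠ φ v

noncomputable def distColoringNumber (G : SimpleGraph V) (ℓ : ℕ) : ℕ :=
  sInf {k | ∃ φ : V → ℕ, IsDistColoring G ℓ φ ∧ ∀ v, φ v ∈ Finset.Icc 1 k}

/-- The strong graph product `G₁ ⊠ G₂`. -/
def strongProd {α β : Type*} (G : SimpleGraph α) (H : SimpleGraph β) :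
    SimpleGraph (α × β) where
  Adj x y := x ≠ y ∧ (x.1 = y.1 ∨ G.Adj x.1 y.1) ∧ (x.2 = y.2 ∨ H.Adj x.2 y.2)
  symm := ⟨by
    rintro x y ⟨hne, h1, h2⟩
    exact ⟨hne.symm, h1.imp Eq.symm (fun h => h.symm), h2.imp Eq.symm (fun h => h.symm)⟩⟩
  loopless := ⟨fun x h => h.1 rfl⟩

/-!
Colour `(x, y)` by the pair `(φ₁ x, φ₂ y)`, ordered lexicographically, where `φ₁` is an `ℓ`-ranking
of `G₁` and `φ₂` a distance-`ℓ` colouring of `G₂`. Both coordinate projections turn a path of the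
strong product into a path that is no longer. If the ends of a short path get the same pair, the
projection to `G₂` shows that they share their second coordinate, so the projection to `G₁` joins
distinct vertices of equal `φ₁`-colour; `φ₁` is larger somewhere on it, and so is the pair at any
lift of that vertex.
-/

namespace SimpleGraph

variable {V W : Type*} {G : SimpleGraph V} {H : SimpleGraph W}

theorem Walk.IsPath.one_le_length_iff {u v : V} {p : G.Walk u v} (hp : p.IsPath) :
    1 ≤ p.length ↔ u ≠ v := by
  rw [Nat.one_le_iff_ne_zero, Ne, Walk.length_eq_zero_iff, hp.nil_iff_eq]

theorem Walk.exists_walk_image {f : V → W}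
    (hf : ∀ ⦃x y⦄, G.Adj x y → f x = f y ∨ H.Adj (f x) (f y)) {u v : V} (p : G.Walk u v) :
    ∃ q : H.Walk (f u) (f v), q.length ≤ p.length ∧
      ∀ w ∈ q.support, ∃ x ∈ p.support, f x = w := by
  induction p with
  | nil => exact ⟨.nil, le_rfl, by simp⟩
  | @cons x y z hxy p ih =>
    obtain ⟨q, hlen, hsupp⟩ := ih
    rcases hf hxy with heq | hadj
    · refine ⟨q.copy heq.symm rfl, by simp; omega, fun w hw => ?_⟩
      obtain ⟨a, ha, rfl⟩ := hsupp w (by simpa using hw)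
      exact ⟨a, by simp [ha], rfl⟩
    · refine ⟨.cons hadj q, by simpa using hlen, fun w hw => ?_⟩
      rw [Walk.support_cons, List.mem_cons] at hw
      rcases hw with rfl | hw
      · exact ⟨x, by simp, rfl⟩
      · obtain ⟨a, ha, rfl⟩ := hsupp w hw
        exact ⟨a, by simp [ha], rfl⟩

theorem Walk.exists_path_image {f : V → W}
    (hf : ∀ ⦃x y⦄, G.Adj x y → f x = f y ∨ H.Adj (f x) (f y)) {u v : V} (p : G.Walk u v) :
    ∃ q : H.Walk (f u) (f v), q.IsPath ∧ q.length ≤ p.length ∧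
      ∀ w ∈ q.support, ∃ x ∈ p.support, f x = w := by
  classical
  obtain ⟨q, hlen, hsupp⟩ := p.exists_walk_image hf
  exact ⟨q.bypass, q.bypass_isPath, q.length_bypass_le_length.trans hlen,
    fun w hw => hsupp w (q.support_bypass_subset_support hw)⟩

end SimpleGraph

section StrongProduct

variable {α β : Type*} {G₁ : SimpleGraph α} {G₂ : SimpleGraph β} {ℓ : ℕ}

theorem strongProd_adj_fst ⦃x y : α × β⦄ (h : (strongProd G₁ G₂).Adj x y) :
    x.1 = y.1 ∨ G₁.Adj x.1 y.1 :=
  h.2.1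

theorem strongProd_adj_snd ⦃x y : α × β⦄ (h : (strongProd G₁ G₂).Adj x y) :
    x.2 = y.2 ∨ G₂.Adj x.2 y.2 :=
  h.2.2

theorem IsLRanking.strongProd {φ₁ : α → ℕ} {φ₂ : β → ℕ} {ψ : α × β → ℕ}
    (h₁ : IsLRanking G₁ ℓ φ₁) (h₂ : IsDistColoring G₂ ℓ φ₂)
    (hψ_eq : ∀ x y, ψ x = ψ y → φ₁ x.1 = φ₁ y.1 ∧ φ₂ x.2 = φ₂ y.2)
    (hψ_lt : ∀ x y, φ₁ x.1 < φ₁ y.1 → ψ x < ψ y) :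
    IsLRanking (strongProd G₁ G₂) ℓ ψ := by
  intro u v p hp hlen hlenℓ
  refine or_iff_not_imp_left.mpr fun huv => ?_
  obtain ⟨hφ₁, hφ₂⟩ := hψ_eq u v (not_not.mp huv)
  have hsnd : u.2 = v.2 := by
    by_contra hne
    obtain ⟨q, hq, hqlen, -⟩ :=
      p.exists_path_image (f := Prod.snd) strongProd_adj_snd
    exact h₂ q hq (hq.one_le_length_iff.mpr hne) (hqlen.trans hlenℓ) hφ₂
  have hfst : u.1 ≠ v.1 := fun h => hp.one_le_length_iff.mp hlen (Prod.ext h hsnd)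
  obtain ⟨q, hq, hqlen, hqsupp⟩ :=
    p.exists_path_image (f := Prod.fst) strongProd_adj_fst
  obtain hne | ⟨a, ha, hlt⟩ :=
    h₁ q hq (hq.one_le_length_iff.mpr hfst) (hqlen.trans hlenℓ)
  · exact absurd hφ₁ hne
  · obtain ⟨x, hx, rfl⟩ := hqsupp a ha
    exact ⟨x, hx, hψ_lt u x hlt⟩

end StrongProduct

section Existence

variable {V : Type*} {G : SimpleGraph V} {ℓ : ℕ} {φ : V → ℕ}

theorem IsDistColoring.isLRanking (h : IsDistColoring G ℓ φ) : IsLRanking G ℓ φ :=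
  fun _ _ p hp h1 hℓ => .inl (h p hp h1 hℓ)

theorem isDistColoring_of_injective (hφ : φ.Injective) : IsDistColoring G ℓ φ :=
  fun _ _ _ hp h1 _ => hφ.ne (hp.one_le_length_iff.mp h1)

theorem exists_isDistColoring_card [Fintype V] :
    ∃ φ : V → ℕ, IsDistColoring G ℓ φ ∧ ∀ v, φ v ∈ Finset.Icc 1 (Fintype.card V) := by
  let e := Fintype.equivFin V
  refine ⟨fun v => e v + 1,
    isDistColoring_of_injective fun u v h => e.injective (Fin.ext (Nat.succ_injective h)),
    fun v => Finset.mem_Icc.mpr ⟨Nat.le_add_left 1 _, (e v).isLt⟩⟩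

theorem exists_isDistColoring_distColoringNumber [Fintype V] :
    ∃ φ : V → ℕ, IsDistColoring G ℓ φ ∧ ∀ v, φ v ∈ Finset.Icc 1 (distColoringNumber G ℓ) :=
  Nat.sInf_mem (s := {k | ∃ φ : V → ℕ, IsDistColoring G ℓ φ ∧ ∀ v, φ v ∈ Finset.Icc 1 k})
    ⟨_, exists_isDistColoring_card⟩

theorem exists_isLRanking_rankingNumber [Fintype V] :
    ∃ φ : V → ℕ, IsLRanking G ℓ φ ∧ ∀ v, φ v ∈ Finset.Icc 1 (rankingNumber G ℓ) := by
  obtain ⟨φ, hφ, hmem⟩ := exists_isDistColoring_card (G := G) (ℓ := ℓ)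
  exact Nat.sInf_mem (s := {k | ∃ φ : V → ℕ, IsLRanking G ℓ φ ∧ ∀ v, φ v ∈ Finset.Icc 1 k})
    ⟨_, φ, hφ.isLRanking, hmem⟩

end Existence

namespace Nat

variable {a a' b b' k : ℕ}

theorem sub_one_mul_add_lt_of_lt (ha : 1 ≤ a) (hb : b ≤ k) (hb' : 1 ≤ b') (hlt : a < a') :
    (a - 1) * k + b < (a' - 1) * k + b' := by
  calc (a - 1) * k + b ≤ (a - 1) * k + k := by omega
    _ = a * k := by rw [← Nat.succ_mul, Nat.succ_eq_add_one, Nat.sub_add_cancel ha]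
    _ ≤ (a' - 1) * k := Nat.mul_le_mul_right k (by omega)
    _ < (a' - 1) * k + b' := by omega

theorem eq_and_eq_of_sub_one_mul_add_eq (ha : 1 ≤ a) (ha' : 1 ≤ a')
    (hb : b ∈ Finset.Icc 1 k) (hb' : b' ∈ Finset.Icc 1 k)
    (h : (a - 1) * k + b = (a' - 1) * k + b') : a = a' ∧ b = b' := by
  rw [Finset.mem_Icc] at hb hb'
  obtain rfl : a = a' := by
    rcases lt_trichotomy a a' with hlt | heq | hlt
    · exact absurd h (sub_one_mul_add_lt_of_lt ha hb.2 hb'.1 hlt).ne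
    · exact heq
    · exact absurd h (sub_one_mul_add_lt_of_lt ha' hb'.2 hb.1 hlt).ne'
  exact ⟨rfl, by omega⟩

theorem sub_one_mul_add_mem_Icc {m : ℕ} (ha : a ∈ Finset.Icc 1 m) (hb : b ∈ Finset.Icc 1 k) :
    (a - 1) * k + b ∈ Finset.Icc 1 (m * k) := by
  rw [Finset.mem_Icc] at ha hb ⊢
  refine ⟨by omega, ?_⟩
  calc (a - 1) * k + b ≤ (m - 1) * k + k := by gcongr <;> omega
    _ = m * k := by rw [← Nat.succ_mul, Nat.succ_eq_add_one, Nat.sub_add_cancel (by omega)]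

end Nat

theorem ranking_strongProd_general {α β : Type*} [Fintype α] [Fintype β]
    (G₁ : SimpleGraph α) (G₂ : SimpleGraph β) (ℓ : ℕ) :
    rankingNumber (strongProd G₁ G₂) ℓ ≤ rankingNumber G₁ ℓ * distColoringNumber G₂ ℓ := by
  obtain ⟨φ₁, h₁, hφ₁⟩ := exists_isLRanking_rankingNumber (G := G₁) (ℓ := ℓ)
  obtain ⟨φ₂, h₂, hφ₂⟩ := exists_isDistColoring_distColoringNumber (G := G₂) (ℓ := ℓ)
  have one_le_φ₁ a : 1 ≤ φ₁ a := (Finset.mem_Icc.mp (hφ₁ a)).1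
  let ψ : α × β → ℕ := fun x => (φ₁ x.1 - 1) * distColoringNumber G₂ ℓ + φ₂ x.2
  refine Nat.sInf_le ⟨ψ, h₁.strongProd h₂ (fun x y h => ?_) (fun x y h => ?_),
    fun x => Nat.sub_one_mul_add_mem_Icc (hφ₁ x.1) (hφ₂ x.2)⟩
  · exact Nat.eq_and_eq_of_sub_one_mul_add_eq (one_le_φ₁ _) (one_le_φ₁ _) (hφ₂ x.2) (hφ₂ y.2) h
  · exact Nat.sub_one_mul_add_lt_of_lt (one_le_φ₁ _) (Finset.mem_Icc.mp (hφ₂ x.2)).2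
      (Finset.mem_Icc.mp (hφ₂ y.2)).1 h

/-- `χ_ℓ(G₁ ⊠ G₂) ≤ χ_ℓ(G₁) · χ̄_ℓ(G₂)`. -/
theorem ranking_strongProd {α β : Type*} [Fintype α] [Fintype β]
    (G₁ : SimpleGraph α) (G₂ : SimpleGraph β) (ℓ : ℕ) (hℓ : 1 ≤ ℓ) :
    rankingNumber (strongProd G₁ G₂) ℓ ≤ rankingNumber G₁ ℓ * distColoringNumber G₂ ℓ :=
  ranking_strongProd_general G₁ G₂ ℓ
end

section
/- Let h, k ≥ 1 be integers, let U be a graph with 2-ranking number χ₂(U) ≥ h, and let G be obtained from k+1 disjoint copies U₀,…,U_k of U by adding a new apex vertex a adjacent to every vertex of every copy. Then for any integer k₀ ∈ {1,…,k} and any 2-ranking φ of G using only colours in {k₀,…,k} on the copies U₀,…,U_k, we have φ(a) ≥ k₀ + h. -/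
open SimpleGraph

variable {V : Type*}

/-- The graph obtained from `k+1` disjoint copies of `U` by adding an apex vertex
(the vertex `none`) adjacent to every vertex of every copy. -/
def apexCopies {α : Type*} (U : SimpleGraph α) (k : ℕ) :
    SimpleGraph (Option (Fin (k + 1) × α)) where
  Adj x y :=
    (x = none ∧ y ≠ none) ∨ (y = none ∧ x ≠ none) ∨
      (∃ (i : Fin (k + 1)) (u v : α), x = some (i, u) ∧ y = some (i, v) ∧ U.Adj u v)
  symm := by
    constructor
    rintro x y (⟨h1, h2⟩ | ⟨h1, h2⟩ | ⟨i, u, v, h1, h2, h3⟩)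
    · exact Or.inr (Or.inl ⟨h1, h2⟩)
    · exact Or.inl ⟨h1, h2⟩
    · exact Or.inr (Or.inr ⟨i, v, u, h2, h1, h3.symm⟩)
  loopless := by
    constructor
    rintro x (⟨h1, h2⟩ | ⟨h1, h2⟩ | ⟨i, u, v, h1, h2, h3⟩)
    · exact h2 h1
    · exact h2 h1
    · rw [h1] at h2
      simp only [Option.some.injEq, Prod.mk.injEq] at h2
      exact h3.ne h2.2

/-! Two vertices of the same colour with a common neighbour `z` force `z` to carry a larger
colour. As the apex is a common neighbour of all `k + 1` copies while only `k` colours are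
available there, some copy `Uᵢ` is coloured entirely below `φ(a)`. Shifting the colours of `Uᵢ`
down by `k₀ - 1` gives a 2-ranking of `U` with colours in `{1, …, φ(a) - k₀}`, so
`h ≤ χ₂(U) ≤ φ(a) - k₀`. -/

section

variable {W : Type*} {G : SimpleGraph V} {ℓ : ℕ} {φ : V → ℕ}

lemma rankingNumber_le (hφ : IsLRanking G ℓ φ) {m : ℕ} (hm : ∀ v, φ v ∈ Finset.Icc 1 m) :
    rankingNumber G ℓ ≤ m :=
  Nat.sInf_le ⟨φ, hφ, hm⟩

namespace IsLRanking

lemma comap (hφ : IsLRanking G ℓ φ) {H : SimpleGraph W} (f : H ↪g G) :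
    IsLRanking H ℓ (φ ∘ f) := by
  intro u v p hp h1 h2
  rcases hφ (p.map f.toHom) (hp.map f.injective) (by simpa using h1) (by simpa using h2) with
    hne | ⟨w, hw, hlt⟩
  · exact Or.inl hne
  · rw [Walk.support_map] at hw
    obtain ⟨w', hw', rfl⟩ := List.mem_map.mp hw
    exact Or.inr ⟨w', hw', hlt⟩

lemma comp_strictMonoOn (hφ : IsLRanking G ℓ φ) {g : ℕ → ℕ} {s : Set ℕ} (hg : StrictMonoOn g s)
    (hs : ∀ v, φ v ∈ s) : IsLRanking G ℓ (g ∘ φ) := by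
  intro u v p hp h1 h2
  rcases hφ p hp h1 h2 with hne | ⟨w, hw, hlt⟩
  · exact Or.inl (hg.injOn.ne (hs u) (hs v) hne)
  · exact Or.inr ⟨w, hw, hg (hs u) (hs w) hlt⟩

lemma lt_of_adj_of_adj (hφ : IsLRanking G ℓ φ) (hℓ : 2 ≤ ℓ) {x y z : V} (hxy : x ≠ y)
    (hxz : G.Adj x z) (hzy : G.Adj z y) (heq : φ x = φ y) : φ x < φ z := by
  let p : G.Walk x y := .cons hxz (.cons hzy .nil)
  have hp : p.IsPath := by
    simp [p, Walk.isPath_def, hxy, hxz.ne, hzy.ne]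
  rcases hφ p hp (by simp [p]) (by simpa [p] using hℓ) with hne | ⟨w, hw, hlt⟩
  · exact absurd heq hne
  · simp only [p, Walk.support_cons, Walk.support_nil, List.mem_cons, List.not_mem_nil,
      or_false] at hw
    rcases hw with rfl | rfl | rfl
    · exact absurd hlt (lt_irrefl _)
    · exact hlt
    · exact absurd hlt heq.not_lt

lemma exists_lt_of_card_lt {ι : Type*} [Fintype ι] (hφ : IsLRanking G ℓ φ) (hℓ : 2 ≤ ℓ)
    {z : V} {x : ι → V} (hx : Function.Injective x) (hadj : ∀ i, G.Adj (x i) z)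
    {s : Finset ℕ} (hs : ∀ i, φ (x i) ∈ s) (hcard : s.card < Fintype.card ι) :
    ∃ i, φ (x i) < φ z := by
  obtain ⟨i, -, j, -, hij, heq⟩ :=
    Finset.exists_ne_map_eq_of_card_lt_of_maps_to (s := Finset.univ) (f := φ ∘ x) hcard
      fun i _ => hs i
  exact ⟨i, hφ.lt_of_adj_of_adj hℓ (hx.ne hij) (hadj i) (hadj j).symm heq⟩

end IsLRanking

namespace apexCopies

variable {α : Type*} (U : SimpleGraph α) {k : ℕ}

lemma adj_some_none (x : Fin (k + 1) × α) : (apexCopies U k).Adj (some x) none :=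
  Or.inr (Or.inl ⟨rfl, Option.some_ne_none x⟩)

def copy (i : Fin (k + 1)) : U ↪g apexCopies U k where
  toFun u := some (i, u)
  inj' _ _ h := congrArg Prod.snd (Option.some_injective _ h)
  map_rel_iff' {u v} := by
    refine ⟨?_, fun huv => Or.inr (Or.inr ⟨i, u, v, rfl, rfl, huv⟩)⟩
    rintro (⟨h, -⟩ | ⟨h, -⟩ | ⟨j, u', v', hu, hv, huv⟩)
    · exact absurd h (Option.some_ne_none _)
    · exact absurd h (Option.some_ne_none _)
    · change some (i, u) = some (j, u') at hu
      change some (i, v) = some (j, v') at hv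
      simp only [Option.some.injEq, Prod.mk.injEq] at hu hv
      rwa [hu.2, hv.2]

@[simp]
lemma copy_apply (i : Fin (k + 1)) (u : α) : copy U i u = some (i, u) := rfl

variable {U} {φ : Option (Fin (k + 1) × α) → ℕ}

lemma exists_copy_lt_apex (hφ : IsLRanking (apexCopies U k) 2 φ) {s : Finset ℕ}
    (hs : ∀ i u, φ (some (i, u)) ∈ s) (hcard : s.card ≤ k) :
    ∃ i, ∀ u, φ (some (i, u)) < φ none := by
  by_contra! hcopy
  choose f hf using hcopy
  have hinj : Function.Injective fun i => some (i, f i) := fun i j hij =>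
    congrArg Prod.fst (Option.some_injective _ hij)
  obtain ⟨i, hi⟩ := hφ.exists_lt_of_card_lt le_rfl hinj (fun i => adj_some_none U _)
    (fun i => hs i (f i)) (by simpa using Nat.lt_succ_of_le hcard)
  exact (hf i).not_gt hi

end apexCopies

end

theorem apex_lower_bound_general {α : Type*} (U : SimpleGraph α) (h k : ℕ)
    (hh : 1 ≤ h) (hU : h ≤ rankingNumber U 2)
    (k₀ : ℕ) (hk₀ : k₀ ∈ Finset.Icc 1 k)
    (φ : Option (Fin (k + 1) × α) → ℕ) (hφ : IsLRanking (apexCopies U k) 2 φ)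
    (hrange : ∀ (i : Fin (k + 1)) (u : α), φ (some (i, u)) ∈ Finset.Icc k₀ k) :
    k₀ + h ≤ φ none := by
  have hk₀1 : 1 ≤ k₀ := (Finset.mem_Icc.mp hk₀).1
  obtain ⟨i, hi⟩ := apexCopies.exists_copy_lt_apex hφ hrange (by rw [Nat.card_Icc]; omega)
  have hshift : StrictMonoOn (fun c => c - (k₀ - 1)) (Set.Ici k₀) := fun a ha b hb hab => by
    simp only [Set.mem_Ici] at ha hb
    dsimp only
    omega
  have hψ := (hφ.comap (apexCopies.copy U i)).comp_strictMonoOn hshift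
    fun u => Set.mem_Ici.mpr (Finset.mem_Icc.mp (hrange i u)).1
  have hle := rankingNumber_le hψ (m := φ none - k₀) fun u => by
    have hlow := (Finset.mem_Icc.mp (hrange i u)).1
    have hhigh := hi u
    simp only [Finset.mem_Icc, Function.comp_apply, apexCopies.copy_apply]
    omega
  omega

/-- If `χ₂(U) ≥ h` and `φ` is a 2-ranking of the apex graph whose colours on the copies
lie in `{k₀,…,k}`, then the apex gets colour at least `k₀ + h`. -/
theorem apex_lower_bound {α : Type*} [Fintype α] (U : SimpleGraph α) (h k : ℕ)
    (hh : 1 ≤ h) (hk : 1 ≤ k) (hU : h ≤ rankingNumber U 2)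
    (k₀ : ℕ) (hk₀ : k₀ ∈ Finset.Icc 1 k)
    (φ : Option (Fin (k + 1) × α) → ℕ) (hφ : IsLRanking (apexCopies U k) 2 φ)
    (hrange : ∀ (i : Fin (k + 1)) (u : α), φ (some (i, u)) ∈ Finset.Icc k₀ k) :
    k₀ + h ≤ φ none :=
  apex_lower_bound_general U h k hh hU k₀ hk₀ φ hφ hrange
end

section
/- For any graph U and any integers h, m ≥ 1, the treewidth of the (h,m)-boost satisfies tw(U^{(h,m)}) ≤ tw(U) + 1. -/
open SimpleGraph


/-- A tree decomposition (more generally, an `X`-decomposition) of `G` indexed by the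
vertices of a graph `T`: each vertex's set of bags induces a connected subgraph of `T`,
and each edge of `G` is contained in some bag. -/
structure TreeDecomp {V X : Type*} (G : SimpleGraph V) (T : SimpleGraph X) where
  bag : X → Set V
  subtree : ∀ v : V, (T.induce {x | v ∈ bag x}).Connected
  covers : ∀ ⦃u v : V⦄, G.Adj u v → ∃ x, u ∈ bag x ∧ v ∈ bag x

/-- `G` has a tree decomposition of width at most `t`. -/
def HasTreewidthAtMost {V : Type*} (G : SimpleGraph V) (t : ℕ) : Prop :=
  ∃ (X : Type) (T : SimpleGraph X), T.IsTree ∧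
    ∃ D : TreeDecomp G T, ∀ x, (D.bag x).ncard ≤ t + 1

/-- The treewidth of `G`. -/
noncomputable def treewidth {V : Type*} (G : SimpleGraph V) : ℕ :=
  sInf {t | HasTreewidthAtMost G t}


/-- The `(h,m)`-boost of `U`.  Vertices are sequences recording, for each ancestor step,
which of the `h*m+1` copies of `U` was entered and at which vertex of `U`; the empty list
is the root `a₀` (the single vertex of layer `L₀`), and lists of length `i ≤ m` are the
vertices of layer `L_i`.  A vertex is adjacent to every vertex of each of its child
copies, and two vertices in the same copy are adjacent iff they are adjacent in `U`. -/
def boost {α : Type*} (U : SimpleGraph α) (h m : ℕ) :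
    SimpleGraph {l : List (Fin (h * m + 1) × α) // l.length ≤ m} where
  Adj x y :=
    (∃ p, y.1 = x.1 ++ [p]) ∨ (∃ p, x.1 = y.1 ++ [p]) ∨
      (∃ (l : List (Fin (h * m + 1) × α)) (p q : Fin (h * m + 1) × α),
        x.1 = l ++ [p] ∧ y.1 = l ++ [q] ∧ p.1 = q.1 ∧ U.Adj p.2 q.2)
  symm := by
    constructor
    rintro x y (⟨p, hp⟩ | ⟨p, hp⟩ | ⟨l, p, q, h1, h2, h3, h4⟩)
    · exact Or.inr (Or.inl ⟨p, hp⟩)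
    · exact Or.inl ⟨p, hp⟩
    · exact Or.inr (Or.inr ⟨l, q, p, h2, h1, h3.symm, h4.symm⟩)
  loopless := by
    constructor
    rintro x (⟨p, hp⟩ | ⟨p, hp⟩ | ⟨l, p, q, h1, h2, h3, h4⟩)
    · have := congrArg List.length hp; simp at this
    · have := congrArg List.length hp; simp at this
    · rw [h1] at h2
      have : p = q := by
        have := List.append_inj_right h2 rfl
        simpa using this
      exact h4.ne (congrArg Prod.snd this)

/-!
Fix a tree decomposition `(T, B)` of `U` of optimal width, a node `r` of `T`, and for every vertex
`v` of `U` a node `χ v` whose bag contains `v`. The index tree of the new decomposition has a hub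
node with bag `{a}` for every boost vertex `a`, and for every copy `j` of `U` below `a` a copy of
`T` whose node `x` carries `{a} ∪ {a ++ [(j, v)] | v ∈ B x}`: the apex `a` is adjacent to the whole
copy, so adding it to every bag of `T` handles those edges, at the cost of one extra vertex per bag.
Each copy of `T` is rooted at `r` and hangs from the hub of `a`; the hub of `a ++ [(j, v)]` hangs
from node `χ v` of the copy `(a, j)`, whose bag already contains that vertex. These parent links
decrease the rank (depth of the copy, distance to `r` in `T`) lexicographically, so the index graph
is a tree.
-/

namespace SimpleGraph

theorem isAcyclic_fromRel_of_rank {V β : Type*} [LinearOrder β] {P : V → V → Prop}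
    (rank : V → β) (rank_lt : ∀ ⦃u v⦄, P u v → rank v < rank u)
    (unique : ∀ ⦃u v w⦄, P u v → P u w → v = w) : (fromRel P).IsAcyclic := by
  intro v c hc
  classical
  obtain ⟨u, hu, hmax⟩ := c.support.toFinset.exists_max_image rank
    ⟨v, List.mem_toFinset.2 c.start_mem_support⟩
  rw [List.mem_toFinset] at hu
  set c' := c.rotate u hu
  have hc' : c'.IsCycle := hc.rotate hu
  -- a vertex of maximal rank on a cycle would have two distinct parents
  have isParent_of_adj : ∀ i, (fromRel P).Adj u (c'.getVert i) → P u (c'.getVert i) := by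
    intro i hadj
    have hle : rank (c'.getVert i) ≤ rank u := hmax _ (List.mem_toFinset.2
      ((c.mem_support_rotate_iff u hu).1 (c'.getVert_mem_support i)))
    exact ((fromRel_adj _ _ _).1 hadj).2.resolve_right fun h => (rank_lt h).not_ge hle
  exact hc'.snd_ne_penultimate (unique (isParent_of_adj _ (c'.adj_snd hc'.not_nil))
    (isParent_of_adj _ (c'.adj_penultimate hc'.not_nil).symm))

theorem IsTree.eq_of_adj_of_dist_lt {X : Type*} {T : SimpleGraph X} (hT : T.IsTree) (r : X)
    {x y z : X} (hxy : T.Adj x y) (hxz : T.Adj x z)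
    (hy : T.dist r y < T.dist r x) (hz : T.dist r z < T.dist r x) : y = z := by
  classical
  obtain ⟨p, hp, -⟩ := hT.connected.exists_path_of_dist r x
  have eq_penultimate : ∀ w, T.Adj x w → T.dist r w < T.dist r x → w = p.penultimate := by
    intro w hxw hw
    obtain ⟨q, hq, hql⟩ := hT.connected.exists_path_of_dist r w
    have hxq : x ∉ q.support := fun hx =>
      ((dist_le (q.takeUntil x hx)).trans (q.length_takeUntil_le_length hx)).not_gt (hql ▸ hw)
    exact hT.isAcyclic.eq_penultimate_of_adj_end hp hxw
      (hT.isAcyclic.mem_support_of_ne_mem_support_of_adj_of_isPath hp hq hxw hxq)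
  exact (eq_penultimate y hxy hy).trans (eq_penultimate z hxz hz).symm

end SimpleGraph

theorem TreeDecomp.exists_mem_bag {V X : Type*} {G : SimpleGraph V} {T : SimpleGraph X}
    (D : TreeDecomp G T) (v : V) : ∃ x, v ∈ D.bag x :=
  let ⟨x⟩ := (D.subtree v).nonempty
  ⟨x, x.2⟩

theorem HasTreewidthAtMost.treewidth_le {V : Type*} {G : SimpleGraph V} {t : ℕ}
    (h : HasTreewidthAtMost G t) : treewidth G ≤ t :=
  Nat.sInf_le h

theorem hasTreewidthAtMost_treewidth {V : Type*} (G : SimpleGraph V) :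
    HasTreewidthAtMost G (treewidth G) := by
  let D : TreeDecomp G (⊥ : SimpleGraph Unit) :=
    ⟨fun _ => Set.univ, fun _ => IsTree.connected (.of_subsingleton (V := Set.univ)),
      fun _ _ _ => ⟨(), trivial, trivial⟩⟩
  exact Nat.sInf_mem (s := {t | HasTreewidthAtMost G t})
    ⟨Nat.card V, Unit, ⊥, .of_subsingleton, D, fun _ => (Set.ncard_univ V).trans_le (Nat.le_succ _)⟩

namespace BoostDecomp

variable {ι α X : Type*}

/-- `(a, none)` is a hub node with bag `{a}`; `(a, some (j, x))` is node `x` of the copy of `T`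
that decomposes the `j`-th copy of `U` attached below the boost vertex `a`. -/
abbrev Node (ι α X : Type*) : Type _ := List (ι × α) × Option (ι × X)

section Tree

variable (T : SimpleGraph X) (χ : α → X) (r : X)

def IsParent : Node ι α X → Node ι α X → Prop
  | (a, some (j, x)), (a', some (j', x')) =>
      a' = a ∧ j' = j ∧ T.Adj x x' ∧ T.dist r x' < T.dist r x
  | (a, some (_, x)), (a', none) => a' = a ∧ x = r
  | (a, none), (c, some (k, x)) => ∃ v, a = c ++ [(k, v)] ∧ x = χ v
  | (_, none), (_, none) => False

def tree : SimpleGraph (Node ι α X) := fromRel (IsParent T χ r)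

noncomputable def rank : Node ι α X → ℕ ×ₗ ℕ
  | (a, none) => toLex (2 * a.length, 0)
  | (a, some (_, x)) => toLex (2 * a.length + 1, T.dist r x)

variable {T χ r}

theorem rank_lt_of_isParent {y z : Node ι α X} (h : IsParent T χ r y z) :
    rank T r z < rank T r y := by
  rcases y with ⟨a, _ | ⟨j, x⟩⟩ <;> rcases z with ⟨a', _ | ⟨j', x'⟩⟩ <;>
    simp only [IsParent] at h
  · obtain ⟨v, rfl, -⟩ := h
    simp only [rank, Prod.Lex.toLex_lt_toLex, List.length_append, List.length_singleton]
    omega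
  · obtain ⟨rfl, -⟩ := h
    simp only [rank, Prod.Lex.toLex_lt_toLex]
    omega
  · obtain ⟨rfl, -, -, h⟩ := h
    simp only [rank, Prod.Lex.toLex_lt_toLex, lt_self_iff_false, true_and, false_or]
    exact h

theorem IsParent.adj {y z : Node ι α X} (h : IsParent T χ r y z) : (tree T χ r).Adj y z :=
  (fromRel_adj _ _ _).2 ⟨fun e => (rank_lt_of_isParent h).ne (congrArg (rank T r) e).symm,
    Or.inl h⟩

theorem isParent_unique (hT : T.IsTree) {y z w : Node ι α X}
    (hz : IsParent T χ r y z) (hw : IsParent T χ r y w) : z = w := by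
  rcases y with ⟨a, _ | ⟨j, x⟩⟩ <;> rcases z with ⟨a₁, _ | ⟨j₁, x₁⟩⟩ <;>
    rcases w with ⟨a₂, _ | ⟨j₂, x₂⟩⟩ <;> simp only [IsParent] at hz hw
  · obtain ⟨v₁, rfl, rfl⟩ := hz
    obtain ⟨v₂, ha, rfl⟩ := hw
    obtain ⟨rfl, h⟩ := List.append_inj' ha rfl
    obtain ⟨rfl, rfl⟩ := Prod.mk.inj (List.cons.inj h).1
    rfl
  · rw [hz.1, hw.1]
  · obtain ⟨rfl, rfl⟩ := hz
    obtain ⟨-, -, -, h⟩ := hw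
    simp at h
  · obtain ⟨-, -, -, h⟩ := hz
    obtain ⟨rfl, rfl⟩ := hw
    simp at h
  · obtain ⟨rfl, rfl, h₁, d₁⟩ := hz
    obtain ⟨rfl, rfl, h₂, d₂⟩ := hw
    rw [hT.eq_of_adj_of_dist_lt r h₁ h₂ d₁ d₂]

theorem tree_isAcyclic (hT : T.IsTree) : (tree (ι := ι) T χ r).IsAcyclic :=
  isAcyclic_fromRel_of_rank (rank T r) (fun _ _ => rank_lt_of_isParent)
    (fun _ _ _ => isParent_unique hT)

theorem tree_adj_copy (hT : T.IsTree) (a : List (ι × α)) (j : ι) {x x' : X} (h : T.Adj x x') :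
    (tree T χ r).Adj (a, some (j, x)) (a, some (j, x')) := by
  rcases (hT.dist_ne_of_adj r h).lt_or_gt with hlt | hlt
  · exact (IsParent.adj (by exact ⟨rfl, rfl, h.symm, hlt⟩)).symm
  · exact IsParent.adj (by exact ⟨rfl, rfl, h, hlt⟩)

theorem tree_adj_hub (a : List (ι × α)) (j : ι) :
    (tree T χ r).Adj (a, some (j, r)) (a, none) :=
  IsParent.adj (by exact ⟨rfl, rfl⟩)

theorem tree_adj_parent (c : List (ι × α)) (k : ι) (v : α) :
    (tree T χ r).Adj (c ++ [(k, v)], none) (c, some (k, χ v)) :=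
  IsParent.adj (by exact ⟨v, rfl, rfl⟩)

theorem reachable_induce_copy (hT : T.IsTree) {S : Set (Node ι α X)} {A : Set X}
    (hA : (T.induce A).Preconnected) (a : List (ι × α)) (j : ι)
    (hS : ∀ x ∈ A, (a, some (j, x)) ∈ S) {x x' : X} (hx : x ∈ A) (hx' : x' ∈ A) :
    ((tree T χ r).induce S).Reachable ⟨_, hS x hx⟩ ⟨_, hS x' hx'⟩ :=
  (hA ⟨x, hx⟩ ⟨x', hx'⟩).map (⟨fun z => ⟨(a, some (j, z.1)), hS z.1 z.2⟩,
    fun h => tree_adj_copy hT a j h⟩ : T.induce A →g (tree T χ r).induce S)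

theorem tree_connected (hT : T.IsTree) : (tree (ι := ι) T χ r).Connected := by
  have copy_reach_hub : ∀ a (j : ι) x, (tree T χ r).Reachable (a, some (j, x)) (a, none) :=
    fun a j x => ((hT.connected.preconnected x r).map
      (⟨fun z => (a, some (j, z)), tree_adj_copy hT a j⟩ : T →g tree T χ r)).trans
        (tree_adj_hub a j).reachable
  have hub_reach_root : ∀ a : List (ι × α), (tree T χ r).Reachable (a, none) ([], none) := by
    intro a
    induction a using List.reverseRecOn with
    | nil => rfl
    | append_singleton c p ih =>
      exact (tree_adj_parent c p.1 p.2).reachable.trans ((copy_reach_hub c p.1 _).trans ih)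
  refine (connected_iff_exists_forall_reachable _).2 ⟨([], none), ?_⟩
  rintro ⟨a, _ | ⟨j, x⟩⟩
  · exact (hub_reach_root a).symm
  · exact ((copy_reach_hub a j x).trans (hub_reach_root a)).symm

end Tree

section Bags

def bag (B : X → Set α) : Node ι α X → Set (List (ι × α))
  | (a, none) => {a}
  | (a, some (j, x)) => insert a ((fun v => a ++ [(j, v)]) '' B x)

theorem ncard_bag_le {B : X → Set α} {t : ℕ} (hB : ∀ x, (B x).ncard ≤ t) :
    ∀ y : Node ι α X, (bag B y).ncard ≤ t + 1
  | (a, none) => (Set.ncard_singleton a).trans_le (Nat.le_add_left 1 t)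
  | (a, some (j, x)) => by
    have hinj : Function.Injective fun v : α => a ++ [(j, v)] := fun v w h => by simpa using h
    calc (bag B (a, some (j, x))).ncard
        ≤ ((fun v => a ++ [(j, v)]) '' B x).ncard + 1 := Set.ncard_insert_le _ _
      _ = (B x).ncard + 1 := by rw [Set.ncard_image_of_injective _ hinj]
      _ ≤ t + 1 := Nat.add_le_add_right (hB x) 1

theorem bag_finite [Finite α] (B : X → Set α) : ∀ y : Node ι α X, (bag B y).Finite
  | (a, none) => Set.finite_singleton a
  | (a, some (_, x)) => ((B x).toFinite.image _).insert a

variable {T : SimpleGraph X} {χ : α → X} {r : X} {B : X → Set α}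

theorem connected_induce_mem_bag (hT : T.IsTree) (hB : ∀ v, (T.induce {x | v ∈ B x}).Connected)
    (hχ : ∀ v, v ∈ B (χ v)) (l : List (ι × α)) :
    ((tree T χ r).induce {y | l ∈ bag B y}).Connected := by
  set S := {y : Node ι α X | l ∈ bag B y}
  have hub : (l, none) ∈ S := rfl
  have reachable_of_adj : ∀ {y z} (hy : y ∈ S) (hz : z ∈ S), (tree T χ r).Adj y z →
      ((tree T χ r).induce S).Reachable ⟨y, hy⟩ ⟨z, hz⟩ :=
    fun _ _ h => Adj.reachable (G := (tree T χ r).induce S) h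
  refine (connected_iff_exists_forall_reachable _).2 ⟨⟨_, hub⟩, ?_⟩
  rintro ⟨⟨a, _ | ⟨j, x⟩⟩, hy⟩
  · obtain rfl : l = a := hy
    rfl
  · rcases hy with rfl | ⟨v, hv, rfl⟩
    · have hT' : (T.induce Set.univ).Preconnected :=
        (induceUnivIso T).preconnected_iff.2 hT.connected.preconnected
      have hcopy : ∀ x ∈ Set.univ, (l, some (j, x)) ∈ S := fun x _ => Set.mem_insert l _
      exact (reachable_of_adj hub (hcopy r trivial) (tree_adj_hub l j).symm).trans
        (reachable_induce_copy hT hT' l j hcopy trivial trivial)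
    · have hcopy : ∀ x ∈ {x | v ∈ B x}, (a, some (j, x)) ∈ S :=
        fun x hx => Set.mem_insert_of_mem a ⟨v, hx, rfl⟩
      exact (reachable_of_adj hub (hcopy _ (hχ v)) (tree_adj_parent a j v)).trans
        (reachable_induce_copy hT (hB v).preconnected a j hcopy (hχ v) hv)

end Bags

theorem exists_bag_of_boost_adj {U : SimpleGraph α} {T : SimpleGraph X} {h m : ℕ}
    (D : TreeDecomp U T) {χ : α → X} (hχ : ∀ v, v ∈ D.bag (χ v)) {u w}
    (huw : (boost U h m).Adj u w) :
    ∃ y : Node (Fin (h * m + 1)) α X, u.1 ∈ bag D.bag y ∧ w.1 ∈ bag D.bag y := by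
  rcases huw with ⟨⟨j, v⟩, hw⟩ | ⟨⟨j, v⟩, hu⟩ | ⟨l, ⟨j, v⟩, ⟨k, v'⟩, hu, hw, rfl, hadj⟩
  · exact ⟨(u.1, some (j, χ v)), Set.mem_insert _ _, hw ▸ Set.mem_insert_of_mem _ ⟨v, hχ v, rfl⟩⟩
  · exact ⟨(w.1, some (j, χ v)), hu ▸ Set.mem_insert_of_mem _ ⟨v, hχ v, rfl⟩, Set.mem_insert _ _⟩
  · obtain ⟨x, hv, hv'⟩ := D.covers hadj
    exact ⟨(l, some (j, x)), hu ▸ Set.mem_insert_of_mem _ ⟨v, hv, rfl⟩,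
      hw ▸ Set.mem_insert_of_mem _ ⟨v', hv', rfl⟩⟩

end BoostDecomp

open BoostDecomp in
theorem hasTreewidthAtMost_boost {α : Type} [Finite α] {U : SimpleGraph α} {t : ℕ}
    (hU : HasTreewidthAtMost U t) (h m : ℕ) : HasTreewidthAtMost (boost U h m) (t + 1) := by
  obtain ⟨X, T, hT, D, hD⟩ := hU
  choose χ hχ using D.exists_mem_bag
  let r := hT.connected.nonempty.some
  let D' : TreeDecomp (boost U h m) (tree T χ r) :=
    ⟨fun y => Subtype.val ⁻¹' bag D.bag y,
      fun w => connected_induce_mem_bag hT D.subtree hχ w.1,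
      fun _ _ => exists_bag_of_boost_adj D hχ⟩
  refine ⟨_, tree T χ r, ⟨tree_connected hT, tree_isAcyclic hT⟩, D', fun y => ?_⟩
  calc (D'.bag y).ncard
      ≤ (bag D.bag y).ncard := Set.ncard_le_ncard_of_injOn Subtype.val (fun _ hw => hw)
        Subtype.val_injective.injOn (bag_finite _ y)
    _ ≤ t + 1 + 1 := ncard_bag_le hD y

theorem boost_treewidth_general {α : Type} [Fintype α] (U : SimpleGraph α) (h m : ℕ) :
    treewidth (boost U h m) ≤ treewidth U + 1 :=
  (hasTreewidthAtMost_boost (hasTreewidthAtMost_treewidth U) h m).treewidth_le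

/-- `tw(U^{(h,m)}) ≤ tw(U) + 1`. -/
theorem boost_treewidth {α : Type} [Fintype α] (U : SimpleGraph α) (h m : ℕ)
    (hh : 1 ≤ h) (hm : 1 ≤ m) :
    treewidth (boost U h m) ≤ treewidth U + 1 :=
  boost_treewidth_general U h m
end

section
/- Let H be a graph, let (B_x : x ∈ V(T)) be a tree decomposition of H, and let ξ: V(H) → ℝ be positive on V(H). Then for any integer c > 1, there exists S_T ⊆ V(T) with |S_T| ≤ c such that every connected component X of H − (∪_{x∈S_T} B_x) satisfies Σ_{v∈V(X)} ξ(v) ≤ (1/c)·Σ_{v∈V(H)} ξ(v). -/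
open SimpleGraph

/-!
Root the tree `T` at some node and charge the weight of each vertex of `H` to one node whose
bag contains it. Pick a deepest node `x₀` whose subtree carries weight more than `W / c`
(`W` the total weight), put it into the separator and recurse on the weight outside the
subtree of `x₀`. Components of `T - x₀` below `x₀` hang off children of `x₀`, so by the
choice of `x₀` they weigh at most `W / c`; and every chosen node discards more than `W / c`
of the weight, so at most `c` nodes are chosen. Finally, the bags containing a vertex form
a subtree and adjacent vertices share a bag, so a component of `H` minus the chosen bags is
charged to nodes of a single component of `T` minus the chosen nodes.
-/

open Finset

namespace SimpleGraph

variable {X : Type*} {T : SimpleGraph X}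

def ReachableAvoiding (T : SimpleGraph X) (S : Set X) (a b : X) : Prop :=
  ∃ p : T.Walk a b, ∀ v ∈ p.support, v ∉ S

namespace ReachableAvoiding

variable {S S' : Set X} {a b c : X}

theorem symm (h : T.ReachableAvoiding S a b) : T.ReachableAvoiding S b a :=
  let ⟨p, hp⟩ := h
  ⟨p.reverse, fun v hv => hp v (by simpa using hv)⟩

theorem trans (h₁ : T.ReachableAvoiding S a b) (h₂ : T.ReachableAvoiding S b c) :
    T.ReachableAvoiding S a c :=
  let ⟨p, hp⟩ := h₁
  let ⟨q, hq⟩ := h₂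
  ⟨p.append q, fun v hv => (Walk.mem_support_append_iff p q).mp hv |>.elim (hp v) (hq v)⟩

theorem mono (hS : S' ⊆ S) (h : T.ReachableAvoiding S a b) : T.ReachableAvoiding S' a b :=
  let ⟨p, hp⟩ := h
  ⟨p, fun v hv hvS => hp v hv (hS hvS)⟩

theorem right_notMem (h : T.ReachableAvoiding S a b) : b ∉ S :=
  let ⟨p, hp⟩ := h
  hp b p.end_mem_support

end ReachableAvoiding

theorem IsAcyclic.eq_of_adj_of_reachableAvoiding (hT : T.IsAcyclic) {x a b : X}
    (ha : T.Adj x a) (hb : T.Adj x b) (hab : T.ReachableAvoiding {x} a b) : a = b := by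
  obtain ⟨p, hp⟩ := hab
  have hbridge := isBridge_iff_forall_walk_mem_edges.mp
    (isAcyclic_iff_forall_adj_isBridge.mp hT hb) (p.cons ha)
  rw [Walk.edges_cons, List.mem_cons] at hbridge
  rcases hbridge with h | h
  · exact (Sym2.congr_right.mp h).symm
  · exact (hp x (p.fst_mem_support_of_mem_edges h) rfl).elim

namespace IsTree

variable (hT : T.IsTree) (r : X)

/-- `x ∈ (hT.rootPath r z).support` says that `x` is an ancestor of `z` in `T` rooted at `r`. -/
noncomputable def rootPath (z : X) : T.Walk r z := (hT.existsUnique_path r z).choose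

noncomputable def depth (z : X) : ℕ := (hT.rootPath r z).length

open scoped Classical in
noncomputable def weightBelow {ι : Type*} (f : ι → X) (w : ι → ℝ) (s : Finset ι) (x : X) :
    ℝ :=
  ∑ i ∈ s with x ∈ (hT.rootPath r (f i)).support, w i

variable {r}

theorem isPath_rootPath (z : X) : (hT.rootPath r z).IsPath :=
  (hT.existsUnique_path r z).choose_spec.1

theorem eq_rootPath {z : X} {p : T.Walk r z} (hp : p.IsPath) : p = hT.rootPath r z :=
  (hT.existsUnique_path r z).choose_spec.2 p hp

theorem mem_support_rootPath_iff {x z : X} :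
    x ∈ (hT.rootPath r z).support ↔ ¬ T.ReachableAvoiding {x} r z := by
  classical
  constructor
  · rintro hx ⟨p, hp⟩
    rw [← hT.eq_rootPath p.bypass_isPath] at hx
    exact hp x (p.support_bypass_subset_support hx) rfl
  · intro h
    by_contra hx
    exact h ⟨_, fun v hv (hvx : v = x) => hx (hvx ▸ hv)⟩

theorem mem_support_rootPath_congr {x y z : X} (h : T.ReachableAvoiding {x} y z) :
    x ∈ (hT.rootPath r y).support ↔ x ∈ (hT.rootPath r z).support := by
  simp only [hT.mem_support_rootPath_iff, not_iff_not]
  exact ⟨fun hy => hy.trans h, fun hz => hz.trans h.symm⟩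

theorem depth_lt_depth {x z : X} (hx : x ∈ (hT.rootPath r z).support) (hne : x ≠ z) :
    hT.depth r x < hT.depth r z := by
  classical
  have := Walk.length_takeUntil_lt_length hx hne
  unfold depth
  rwa [hT.eq_rootPath ((hT.isPath_rootPath z).takeUntil hx)] at this

theorem exists_adj_of_mem_support_rootPath {x z : X} (hx : x ∈ (hT.rootPath r z).support)
    (hne : x ≠ z) :
    ∃ a, T.Adj x a ∧ a ∈ (hT.rootPath r z).support ∧ T.ReachableAvoiding {x} a z := by
  classical
  have hpath := (hT.isPath_rootPath z).dropUntil hx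
  obtain ⟨a, hxa, q, hq⟩ :=
    Walk.not_nil_iff.mp (Walk.not_nil_of_ne (p := (hT.rootPath r z).dropUntil x hx) hne)
  rw [hq, Walk.cons_isPath_iff] at hpath
  refine ⟨a, hxa, ?_, q, fun v hv (hvx : v = x) => hpath.2 (hvx ▸ hv)⟩
  apply Walk.support_dropUntil_subset_support _ hx
  rw [hq, Walk.support_cons]
  exact List.mem_cons_of_mem _ q.start_mem_support

theorem exists_child_of_mem_support_rootPath {x y : X} (hx : x ∈ (hT.rootPath r y).support)
    (hne : x ≠ y) :
    ∃ a, hT.depth r x < hT.depth r a ∧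
      ∀ z, T.ReachableAvoiding {x} y z → a ∈ (hT.rootPath r z).support := by
  obtain ⟨a, hxa, -, hay⟩ := hT.exists_adj_of_mem_support_rootPath hx hne
  have hxa' : x ∈ (hT.rootPath r a).support := (hT.mem_support_rootPath_congr hay).mpr hx
  refine ⟨a, hT.depth_lt_depth hxa' hxa.ne, fun z hyz => ?_⟩
  have hxz : x ∈ (hT.rootPath r z).support := (hT.mem_support_rootPath_congr hyz).mp hx
  obtain ⟨b, hxb, hb, hbz⟩ :=
    hT.exists_adj_of_mem_support_rootPath hxz fun h => hyz.right_notMem h.symm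
  rwa [hT.isAcyclic.eq_of_adj_of_reachableAvoiding hxa hxb ((hay.trans hyz).trans hbz.symm)]

section Weights

open scoped Classical

variable {ι : Type*} {f : ι → X} {w : ι → ℝ} {s : Finset ι} {t : ℝ}

theorem weightBelow_root : hT.weightBelow r f w s r = ∑ i ∈ s, w i := by
  rw [weightBelow, filter_true_of_mem fun i _ => Walk.start_mem_support _]

theorem exists_mem_support_of_lt_weightBelow (ht : 0 ≤ t) {x : X}
    (hx : t < hT.weightBelow r f w s x) : ∃ i ∈ s, x ∈ (hT.rootPath r (f i)).support := by
  obtain ⟨i, hi, -⟩ := exists_ne_zero_of_sum_ne_zero (hx.trans_le' ht).ne'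
  exact ⟨i, (mem_filter.mp hi)⟩

theorem exists_deepest_lt_weightBelow (ht : 0 ≤ t) (hs : t < ∑ i ∈ s, w i) :
    ∃ x₀, t < hT.weightBelow r f w s x₀ ∧
      ∀ y, t < hT.weightBelow r f w s y → hT.depth r y ≤ hT.depth r x₀ := by
  set heavy := (s.biUnion fun i => (hT.rootPath r (f i)).support.toFinset).filter
    fun x => t < hT.weightBelow r f w s x
  have hmem : ∀ y, t < hT.weightBelow r f w s y → y ∈ heavy := fun y hy => by
    obtain ⟨i, hi, hyi⟩ := hT.exists_mem_support_of_lt_weightBelow ht hy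
    exact mem_filter.mpr ⟨mem_biUnion.mpr ⟨i, hi, List.mem_toFinset.mpr hyi⟩, hy⟩
  obtain ⟨x₀, hx₀, hmax⟩ := heavy.exists_max_image (hT.depth r)
    ⟨r, hmem r (hT.weightBelow_root ▸ hs)⟩
  exact ⟨x₀, (mem_filter.mp hx₀).2, fun y hy => hmax y (hmem y hy)⟩

theorem sum_reachableAvoiding_le_of_deepest (hw : ∀ i, 0 ≤ w i) {x₀ y : X} {S : Set X}
    (hmax : ∀ y, t < hT.weightBelow r f w s y → hT.depth r y ≤ hT.depth r x₀)
    (hx₀S : x₀ ∈ S) (hx₀y : x₀ ∈ (hT.rootPath r y).support) (hne : x₀ ≠ y) :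
    ∑ i ∈ s with T.ReachableAvoiding S y (f i), w i ≤ t := by
  obtain ⟨a, hdepth, ha⟩ := hT.exists_child_of_mem_support_rootPath hx₀y hne
  calc ∑ i ∈ s with T.ReachableAvoiding S y (f i), w i ≤ hT.weightBelow r f w s a :=
        sum_le_sum_of_subset_of_nonneg (monotone_filter_right s fun i _ h =>
          ha (f i) (h.mono (Set.singleton_subset_iff.mpr hx₀S))) fun i _ _ => hw i
    _ ≤ t := not_lt.mp fun h => (hmax a h).not_gt hdepth

theorem sum_reachableAvoiding_insert_le (hw : ∀ i, 0 ≤ w i) {x₀ y : X} {S : Set X}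
    (hx₀y : x₀ ∉ (hT.rootPath r y).support) :
    ∑ i ∈ s with T.ReachableAvoiding (insert x₀ S) y (f i), w i ≤
      ∑ i ∈ s.filter (fun i => x₀ ∉ (hT.rootPath r (f i)).support)
        with T.ReachableAvoiding S y (f i), w i := by
  refine sum_le_sum_of_subset_of_nonneg (fun i hi => ?_) fun i _ _ => hw i
  obtain ⟨hi, hyi⟩ := mem_filter.mp hi
  have hx₀i := (hT.mem_support_rootPath_congr
    (hyi.mono (Set.singleton_subset_iff.mpr (Set.mem_insert _ _)))).not.mp hx₀y
  exact mem_filter.mpr ⟨mem_filter.mpr ⟨hi, hx₀i⟩, hyi.mono (Set.subset_insert _ _)⟩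

end Weights

end IsTree

section Separator

open scoped Classical

variable {ι : Type*}

theorem IsTree.exists_separator_weight_le (hT : T.IsTree) (f : ι → X) {w : ι → ℝ}
    (hw : ∀ i, 0 ≤ w i) {t : ℝ} (ht : 0 ≤ t) (s : Finset ι) :
    ∃ S : Finset X, (S = ∅ ∨ S.card * t < ∑ i ∈ s, w i) ∧
      ∀ y ∉ S, ∑ i ∈ s with T.ReachableAvoiding S y (f i), w i ≤ t := by
  obtain ⟨r⟩ := hT.connected.nonempty
  induction s using Finset.strongInduction with
  | H s ih =>
  by_cases hs : ∑ i ∈ s, w i ≤ t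
  · exact ⟨∅, .inl rfl, fun y _ =>
      (sum_le_sum_of_subset_of_nonneg (filter_subset _ _) fun i _ _ => hw i).trans hs⟩
  replace hs := not_le.mp hs
  obtain ⟨x₀, hx₀, hmax⟩ := hT.exists_deepest_lt_weightBelow (r := r) (f := f) ht hs
  set s' := s.filter fun i => x₀ ∉ (hT.rootPath r (f i)).support
  have hs' : s' ⊂ s := by
    obtain ⟨i, hi, hx₀i⟩ := hT.exists_mem_support_of_lt_weightBelow ht hx₀
    exact filter_ssubset.mpr ⟨i, hi, not_not.mpr hx₀i⟩
  obtain ⟨S', hS'card, hS'⟩ := ih s' hs'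
  have hsplit : ∑ i ∈ s', w i + hT.weightBelow r f w s x₀ = ∑ i ∈ s, w i := by
    rw [weightBelow, add_comm]
    exact sum_filter_add_sum_filter_not s _ w
  have hcard' : (S'.card : ℝ) * t ≤ ∑ i ∈ s', w i := by
    rcases hS'card with rfl | h
    · simpa using sum_nonneg fun i _ => hw i
    · exact h.le
  refine ⟨insert x₀ S', .inr ?_, fun y hy => ?_⟩
  · calc ((insert x₀ S').card : ℝ) * t ≤ (S'.card + 1) * t := by
          gcongr
          exact_mod_cast card_insert_le _ _
      _ < ∑ i ∈ s, w i := by linarith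
  rw [mem_insert, not_or] at hy
  rw [coe_insert]
  by_cases hx₀y : x₀ ∈ (hT.rootPath r y).support
  · exact hT.sum_reachableAvoiding_le_of_deepest hw hmax (Set.mem_insert _ _) hx₀y (Ne.symm hy.1)
  · exact (hT.sum_reachableAvoiding_insert_le hw hx₀y).trans (hS' y hy.2)

theorem IsTree.exists_separator_card_le (hT : T.IsTree) (f : ι → X) {w : ι → ℝ}
    (hw : ∀ i, 0 ≤ w i) (s : Finset ι) {c : ℕ} (hc : c ≠ 0) :
    ∃ S : Finset X, S.card ≤ c ∧
      ∀ y ∉ S,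
        ∑ i ∈ s with T.ReachableAvoiding S y (f i), w i ≤ (∑ i ∈ s, w i) / c := by
  have hc' : (0 : ℝ) < c := by positivity
  have ht : 0 ≤ (∑ i ∈ s, w i) / c := div_nonneg (sum_nonneg fun i _ => hw i) hc'.le
  obtain ⟨S, hS | hS, hSw⟩ := hT.exists_separator_weight_le f hw ht s
  · exact ⟨S, by simp [hS], hSw⟩
  refine ⟨S, ?_, hSw⟩
  have hW : (c : ℝ) * ((∑ i ∈ s, w i) / c) = ∑ i ∈ s, w i := mul_div_cancel₀ _ hc'.ne'
  exact_mod_cast (lt_of_mul_lt_mul_right (hS.trans_eq hW.symm) ht).le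

end Separator

end SimpleGraph

namespace TreeDecomp

variable {X : Type*} {T : SimpleGraph X} {V : Type*} {H : SimpleGraph V} (D : TreeDecomp H T)

theorem exists_mem_bag_s13 (v : V) : ∃ x, v ∈ D.bag x :=
  let ⟨⟨x, hx⟩⟩ := (D.subtree v).nonempty
  ⟨x, hx⟩

theorem reachableAvoiding_of_mem_bag {S : Set X} {v : V} (hv : ∀ x ∈ S, v ∉ D.bag x)
    {x₁ x₂ : X} (h₁ : v ∈ D.bag x₁) (h₂ : v ∈ D.bag x₂) :
    T.ReachableAvoiding S x₁ x₂ := by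
  obtain ⟨p⟩ := (D.subtree v).preconnected ⟨x₁, h₁⟩ ⟨x₂, h₂⟩
  refine ⟨p.map (Embedding.induce _).toHom, fun y hy hyS => ?_⟩
  obtain ⟨⟨y, hvy⟩, -, rfl⟩ := List.mem_map.mp (Walk.support_map _ p ▸ hy)
  exact hv y hyS hvy

theorem reachableAvoiding_of_walk {S : Set X} {U : Set V}
    (hU : ∀ v ∈ U, ∀ x ∈ S, v ∉ D.bag x) {a b : U} (p : (H.induce U).Walk a b)
    {x₁ x₂ : X} (h₁ : ↑a ∈ D.bag x₁) (h₂ : ↑b ∈ D.bag x₂) : T.ReachableAvoiding S x₁ x₂ := by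
  induction p generalizing x₁ with
  | @nil u => exact D.reachableAvoiding_of_mem_bag (hU _ u.2) h₁ h₂
  | @cons u v _ huv _ ih =>
    obtain ⟨x, hux, hvx⟩ := D.covers huv
    exact (D.reachableAvoiding_of_mem_bag (hU _ u.2) h₁ hux).trans (ih hvx h₂)

end TreeDecomp

/-- Weighted separator lemma: given a tree decomposition of `H` and a positive weight
function `ξ`, for any integer `c > 1` there is a set `S_T` of at most `c` tree nodes
such that every component of `H` minus the union of their bags has total weight at most
`(1/c)` of the total. -/
theorem weighted_separator {V X : Type*} [Fintype V] (H : SimpleGraph V)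
    (T : SimpleGraph X) (hT : T.IsTree) (D : TreeDecomp H T)
    (ξ : V → ℝ) (hξ : ∀ v, 0 < ξ v) (c : ℕ) (hc : 1 < c) :
    ∃ S_T : Finset X, S_T.card ≤ c ∧
      ∀ C : (H.induce {v : V | v ∉ ⋃ x ∈ S_T, D.bag x}).ConnectedComponent,
        (∑ᶠ v ∈ {v : V | ∃ hv : v ∉ ⋃ x ∈ S_T, D.bag x,
            (H.induce {v : V | v ∉ ⋃ x ∈ S_T, D.bag x}).connectedComponentMk ⟨v, hv⟩ = C},
          ξ v) ≤ (1 / c) * ∑ v : V, ξ v := by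
  classical
  choose home hhome using D.exists_mem_bag_s13
  obtain ⟨S, hcard, hS⟩ :=
    hT.exists_separator_card_le home (fun v => (hξ v).le) univ (by omega : c ≠ 0)
  refine ⟨S, hcard, fun C => ?_⟩
  have hU : ∀ v ∈ {v : V | v ∉ ⋃ x ∈ S, D.bag x}, ∀ x ∈ (S : Set X), v ∉ D.bag x :=
    fun v hv x hx hvx => hv (Set.mem_biUnion hx hvx)
  obtain ⟨v₀, rfl⟩ := C.exists_rep
  rw [finsum_mem_eq_toFinset_sum]
  calc _ ≤ ∑ v with T.ReachableAvoiding S (home v₀) (home v), ξ v := by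
        refine sum_le_sum_of_subset_of_nonneg (fun v hv => ?_) fun v _ _ => (hξ v).le
        obtain ⟨hv, hC⟩ := Set.mem_toFinset.mp hv
        obtain ⟨p⟩ := ConnectedComponent.exact hC.symm
        exact mem_filter.mpr ⟨mem_univ v, D.reachableAvoiding_of_walk hU p (hhome _) (hhome v)⟩
    _ ≤ (∑ v, ξ v) / c := hS _ fun h => hU v₀ v₀.2 _ h (hhome v₀)
    _ = 1 / c * ∑ v, ξ v := by ring
end

section
/- Define log^{(0)} x = x and log^{(i)} x = log(log^{(i−1)} x), and define the tower function τ(0) = 1, τ(i) = e^{τ(i−1)}. Then for every integer i ≥ 1, every real x > τ(i−1), and every a ≥ 0, log^{(i)}(x + a) ≤ log^{(i)} x + a / ∏_{j=0}^{i−1} log^{(j)} x. -/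
/-
The one-step inequality `log (y + b) ≤ log y + b / y` is `log t ≤ t - 1` at `t = (y + b) / y`.
Since `log` is increasing, it can be iterated: applied with `y = log^{(i)} x` and `b` the bound
`a / ∏_{j<i} log^{(j)} x` from the previous level, it divides the increment by one more factor
`log^{(i)} x`. All that is needed is that the iterated logarithms `log^{(j)} x`, `j < i`, be
positive, which `x > τ(i-1)` guarantees.
-/

/-- The `i`-fold iterated natural logarithm. -/
noncomputable def iterLog : ℕ → ℝ → ℝ
  | 0, x => x
  | i + 1, x => Real.log (iterLog i x)

/-- The tower function: `tower 0 = 1`, `tower (i+1) = e^(tower i)`. -/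
noncomputable def tower : ℕ → ℝ
  | 0 => 1
  | i + 1 => Real.exp (tower i)

theorem Real.log_add_le_log_add_div {x a : ℝ} (hx : 0 < x) (hxa : 0 < x + a) :
    Real.log (x + a) ≤ Real.log x + a / x := by
  have h := Real.log_le_sub_one_of_pos (div_pos hxa hx)
  rwa [Real.log_div hxa.ne' hx.ne', add_div, div_self hx.ne', add_sub_cancel_left,
    sub_le_iff_le_add'] at h

theorem tower_pos (n : ℕ) : 0 < tower n := by
  cases n with
  | zero => exact one_pos
  | succ n => exact Real.exp_pos _

theorem tower_lt_iterLog {k m : ℕ} {x : ℝ} (hx : tower (k + m) < x) : tower k < iterLog m x := by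
  induction m generalizing k with
  | zero => exact hx
  | succ m ih =>
    have h : tower (k + 1) < iterLog m x := ih (by rwa [Nat.add_right_comm])
    exact (Real.lt_log_iff_exp_lt ((tower_pos _).trans h)).2 h

theorem iterLog_le_iterLog {i : ℕ} {x y : ℝ} (hx : ∀ j < i, 0 < iterLog j x) (hxy : x ≤ y) :
    iterLog i x ≤ iterLog i y := by
  induction i with
  | zero => exact hxy
  | succ i ih =>
    have hle := ih fun j hj => hx j (Nat.lt_succ_of_lt hj)
    exact Real.log_le_log (hx i i.lt_succ_self) hle

theorem iterLog_add_le_of_pos {i : ℕ} {x a : ℝ} (ha : 0 ≤ a) (hx : ∀ j < i, 0 < iterLog j x) :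
    iterLog i (x + a) ≤ iterLog i x + a / ∏ j ∈ Finset.range i, iterLog j x := by
  induction i with
  | zero => simp [iterLog]
  | succ i ih =>
    have hx' : ∀ j < i, 0 < iterLog j x := fun j hj => hx j (Nat.lt_succ_of_lt hj)
    set L := iterLog i x
    set P := ∏ j ∈ Finset.range i, iterLog j x
    have hL : 0 < L := hx i i.lt_succ_self
    have hP : 0 < P := Finset.prod_pos fun j hj => hx' j (Finset.mem_range.1 hj)
    have hLa : 0 < iterLog i (x + a) := hL.trans_le (iterLog_le_iterLog hx' (by linarith))
    calc Real.log (iterLog i (x + a))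
        ≤ Real.log (L + a / P) := Real.log_le_log hLa (ih hx')
      _ ≤ Real.log L + a / P / L :=
          Real.log_add_le_log_add_div hL (by have := div_nonneg ha hP.le; linarith)
      _ = Real.log L + a / ∏ j ∈ Finset.range (i + 1), iterLog j x := by
          rw [Finset.prod_range_succ, div_div]

theorem iterLog_add_le_general (i : ℕ) (x a : ℝ) (hx : tower (i - 1) < x)
    (ha : 0 ≤ a) :
    iterLog i (x + a) ≤ iterLog i x + a / ∏ j ∈ Finset.range i, iterLog j x := by
  refine iterLog_add_le_of_pos ha fun j hj => (tower_pos (i - 1 - j)).trans (tower_lt_iterLog ?_)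
  rwa [Nat.sub_add_cancel (by omega : j ≤ i - 1)]

/-- For `i ≥ 1`, `x > τ(i−1)` and `a ≥ 0`,
`log^{(i)}(x+a) ≤ log^{(i)} x + a / ∏_{j=0}^{i−1} log^{(j)} x`. -/
theorem iterLog_add_le (i : ℕ) (hi : 1 ≤ i) (x a : ℝ) (hx : tower (i - 1) < x)
    (ha : 0 ≤ a) :
    iterLog i (x + a) ≤ iterLog i x + a / ∏ j ∈ Finset.range i, iterLog j x :=
  iterLog_add_le_general i x a hx ha
end

section
/- Let H be a connected graph that is edge-maximal with respect to a width-t tree decomposition (B_x : x ∈ V(T)) rooted at r, and let L₀,…,L_m be the BFS layering of H with L₀ = B_r. Then for any i ∈ {1,…,m} and any connected component X of H[L_i ∪ ⋯ ∪ L_m], the number of vertices of L_{i−1} adjacent to X satisfies |L_{i−1} ∩ N_H(V(X))| ≤ t. -/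
open SimpleGraph


/-- `H` is edge-maximal with respect to the decomposition: every bag induces a clique. -/
def EdgeMaximal {V X : Type*} {G : SimpleGraph V} {T : SimpleGraph X}
    (D : TreeDecomp G T) : Prop :=
  ∀ x, ∀ u ∈ D.bag x, ∀ v ∈ D.bag x, u ≠ v → G.Adj u v

/-- `(L 0, …, L m)` is a BFS layering of `G`: a partition of the vertices such that every
vertex of `L i` is at distance exactly `i` from `L 0`. -/
def IsBFSLayering {V : Type*} (G : SimpleGraph V) (L : ℕ → Set V) (m : ℕ) : Prop :=
  (∀ v : V, ∃! i, i ≤ m ∧ v ∈ L i) ∧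
    ∀ i ≤ m, ∀ v ∈ L i, (∃ w ∈ L 0, G.dist v w = i) ∧ ∀ w ∈ L 0, i ≤ G.dist v w

/-! The bags meeting the component `X` span a subtree of `T`; let `x` be its node nearest to
the root `r`. A neighbour `u ∈ L (i - 1)` of `X` shares a bag with `X`, so every walk from `u` to
`L 0 = B_r` meets `B_x`. Along a shortest such walk every vertex after `u` lies in a layer below
`i - 1`, whereas `B_x` is a clique containing a vertex `w₀` of `X` (layer `≥ i`) and so lies in
layers `≥ i - 1`. Hence `u ∈ B_x \ {w₀}`, a set of at most `t` vertices. -/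

namespace SimpleGraph

variable {V X : Type*}

theorem Walk.IsPath.append {G : SimpleGraph V} {u v w : V} {p : G.Walk u v} {q : G.Walk v w}
    (hp : p.IsPath) (hq : q.IsPath) (h : ∀ a ∈ p.support, a ∈ q.support → a = v) :
    (p.append q).IsPath := by
  have hq' := hq.support_nodup
  rw [← q.cons_tail_support, List.nodup_cons] at hq'
  rw [Walk.isPath_def, Walk.support_append]
  refine List.nodup_append.mpr ⟨hp.support_nodup, hq'.2, fun a ha b hb hab => ?_⟩
  subst hab
  have hav : a = v := h a ha (q.cons_tail_support ▸ List.mem_cons_of_mem _ hb)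
  exact hq'.1 (hav ▸ hb)

theorem ConnectedComponent.connected_induce_image_val_supp {G : SimpleGraph V} {s : Set V}
    (C : (G.induce s).ConnectedComponent) : (G.induce (Subtype.val '' C.supp)).Connected := by
  let f : C.toSimpleGraph →g G.induce (Subtype.val '' C.supp) :=
    ⟨fun v => ⟨v.1.1, v.1, v.2, rfl⟩, id⟩
  refine C.connected_toSimpleGraph.map f ?_
  rintro ⟨_, v, hv, rfl⟩
  exact ⟨⟨v, hv⟩, rfl⟩

theorem IsTree.exists_forall_walk_mem_support {T : SimpleGraph X} (hT : T.IsTree) {S : Set X}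
    (hS : (T.induce S).Connected) (r : X) :
    ∃ x ∈ S, ∀ y ∈ S, ∀ W : T.Walk y r, x ∈ W.support := by
  classical
  obtain ⟨⟨x₀, hx₀⟩⟩ := hS.nonempty
  obtain ⟨x, hxS, hmin⟩ := exists_minimalFor_of_wellFoundedLT (· ∈ S) (T.dist · r) ⟨x₀, hx₀⟩
  refine ⟨x, hxS, fun y hy W => ?_⟩
  obtain ⟨p, hp⟩ := hT.connected.exists_walk_length_eq_dist x r
  have hpS : ∀ z ∈ p.support, z ∈ S → z = x := by
    intro z hz hzS
    by_contra hzx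
    have hlt : T.dist z r < T.dist x r :=
      hp ▸ (dist_le (p.dropUntil z hz)).trans_lt (Walk.length_dropUntil_lt_length hz hzx)
    exact hlt.not_ge (hmin hzS hlt.le)
  obtain ⟨Q⟩ := hS.preconnected ⟨y, hy⟩ ⟨x, hxS⟩
  let Q' : T.Walk y x := (Q.map (Embedding.induce S).toHom).bypass
  have hQ'S : ∀ z ∈ Q'.support, z ∈ S := by
    intro z hz
    obtain ⟨z', -, rfl⟩ := List.mem_map.mp
      (Walk.support_map _ Q ▸ Walk.support_bypass_subset_support _ hz)
    exact z'.2
  -- A shortest walk from `x` to `r` leaves `S` at once, so `Q' ++ p` is the tree path `y → r`.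
  have hpath : (Q'.append p).IsPath :=
    (Walk.bypass_isPath _).append (p.isPath_of_length_eq_dist hp)
      fun z hzQ hzp => hpS z hzp (hQ'S z hzQ)
  have hW : W.bypass = Q'.append p :=
    (hT.existsUnique_path y r).unique (Walk.bypass_isPath _) hpath
  apply Walk.support_bypass_subset_support
  rw [hW, Walk.mem_support_append_iff]
  exact Or.inr p.start_mem_support

end SimpleGraph

namespace TreeDecomp

variable {V X : Type*} {G : SimpleGraph V} {T : SimpleGraph X} (D : TreeDecomp G T)

def bagsMeeting (S : Set V) : Set X := {x | (D.bag x ∩ S).Nonempty}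

theorem mem_bagsMeeting_of_mem {S : Set V} {v : V} {x : X} (hv : v ∈ S) (hx : v ∈ D.bag x) :
    x ∈ D.bagsMeeting S :=
  ⟨v, hx, hv⟩

theorem mem_bag_of_forall_walk_mem_support {v : V} {x y z : X} (hy : v ∈ D.bag y)
    (hz : v ∈ D.bag z) (hx : ∀ W : T.Walk y z, x ∈ W.support) : v ∈ D.bag x := by
  obtain ⟨W⟩ := (D.subtree v).preconnected ⟨y, hy⟩ ⟨z, hz⟩
  obtain ⟨⟨_, hv⟩, -, rfl⟩ := List.mem_map.mp
    (Walk.support_map _ W ▸ hx (W.map (Embedding.induce _).toHom))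
  exact hv

theorem exists_mem_support_mem_bag {x : X} {a b : V} (p : G.Walk a b) {y z : X}
    (ha : a ∈ D.bag y) (hb : b ∈ D.bag z) (hx : ∀ W : T.Walk y z, x ∈ W.support) :
    ∃ q ∈ p.support, q ∈ D.bag x := by
  induction p generalizing y with
  | nil => exact ⟨_, Walk.start_mem_support _, D.mem_bag_of_forall_walk_mem_support ha hb hx⟩
  | cons hac p ih =>
    obtain ⟨y', hay', hcy'⟩ := D.covers hac
    by_cases hxy' : ∀ W : T.Walk y y', x ∈ W.support
    · exact ⟨_, Walk.start_mem_support _, D.mem_bag_of_forall_walk_mem_support ha hay' hxy'⟩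
    · push Not at hxy'
      obtain ⟨W₁, hW₁⟩ := hxy'
      obtain ⟨q, hq, hqx⟩ := ih hcy' hb fun W₂ => by
        simpa [Walk.mem_support_append_iff, hW₁] using hx (W₁.append W₂)
      exact ⟨q, by simp [hq], hqx⟩

theorem connected_induce_bagsMeeting {S : Set V} (hS : (G.induce S).Connected) :
    (T.induce (D.bagsMeeting S)).Connected := by
  have reachable_of_mem_bags (v : S) {y z : X} (hy : v.1 ∈ D.bag y) (hz : v.1 ∈ D.bag z) :
      (T.induce (D.bagsMeeting S)).Reachable ⟨y, D.mem_bagsMeeting_of_mem v.2 hy⟩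
        ⟨z, D.mem_bagsMeeting_of_mem v.2 hz⟩ :=
    ((D.subtree v).preconnected ⟨y, hy⟩ ⟨z, hz⟩).map
      (T.induceHomOfLE fun _ => D.mem_bagsMeeting_of_mem v.2).toHom
  have reachable_of_walk {a b : S} (p : (G.induce S).Walk a b) :
      ∀ {y z : X} (hy : a.1 ∈ D.bag y) (hz : b.1 ∈ D.bag z),
        (T.induce (D.bagsMeeting S)).Reachable ⟨y, D.mem_bagsMeeting_of_mem a.2 hy⟩
          ⟨z, D.mem_bagsMeeting_of_mem b.2 hz⟩ := by
    induction p with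
    | nil => exact fun hy hz => reachable_of_mem_bags _ hy hz
    | cons hac p ih =>
      intro y z hy hz
      obtain ⟨y', hay', hcy'⟩ := D.covers hac
      exact (reachable_of_mem_bags _ hy hay').trans (ih hcy' hz)
  obtain ⟨v⟩ := hS.nonempty
  obtain ⟨⟨y, hy⟩⟩ := (D.subtree v).nonempty
  refine (connected_iff _).mpr ⟨?_, ⟨⟨y, D.mem_bagsMeeting_of_mem v.2 hy⟩⟩⟩
  rintro ⟨y, v, hvy, hv⟩ ⟨z, w, hwz, hw⟩
  obtain ⟨p⟩ := hS.preconnected ⟨v, hv⟩ ⟨w, hw⟩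
  exact reachable_of_walk p hvy hwz

theorem exists_bag_separating (hT : T.IsTree) {S : Set V} (hS : (G.induce S).Connected)
    (r : X) : ∃ x ∈ D.bagsMeeting S, ∀ ⦃u w : V⦄, w ∈ S → G.Adj u w →
      ∀ a ∈ D.bag r, ∀ p : G.Walk u a, ∃ q ∈ p.support, q ∈ D.bag x := by
  obtain ⟨x, hx, hgate⟩ := hT.exists_forall_walk_mem_support (D.connected_induce_bagsMeeting hS) r
  refine ⟨x, hx, fun u w hw huw a ha p => ?_⟩
  obtain ⟨y, huy, hwy⟩ := D.covers huw
  exact D.exists_mem_support_mem_bag p huy ha (hgate y (D.mem_bagsMeeting_of_mem hw hwy))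

end TreeDecomp

namespace IsBFSLayering

variable {V : Type*} {G : SimpleGraph V} {L : ℕ → Set V} {m : ℕ}

theorem eq_of_mem (hL : IsBFSLayering G L m) {v : V} {j k : ℕ} (hj : v ∈ L j) (hjm : j ≤ m)
    (hk : v ∈ L k) (hkm : k ≤ m) : j = k :=
  (hL.1 v).unique ⟨hjm, hj⟩ ⟨hkm, hk⟩

theorem le_succ_of_adj (hL : IsBFSLayering G L m) {u v : V} {j k : ℕ} (huv : G.Adj u v)
    (hu : u ∈ L j) (hjm : j ≤ m) (hv : v ∈ L k) (hkm : k ≤ m) : k ≤ j + 1 := by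
  obtain ⟨a, ha, hua⟩ := (hL.2 j hjm u hu).1
  have hva := (hL.2 k hkm v hv).2 a ha
  rw [dist_comm] at hua hva
  rcases huv.diff_dist_adj (u := a) with h | h | h <;> omega

theorem exists_walk_to_layer_zero (hL : IsBFSLayering G L m) {u : V} {j : ℕ} (hjm : j ≤ m)
    (hu : u ∈ L j) :
    ∃ a ∈ L 0, ∃ p : G.Walk u a, ∀ q ∈ p.support, q ≠ u → ∀ k ≤ m, q ∈ L k → k < j := by
  classical
  obtain ⟨a, ha, hua⟩ := (hL.2 j hjm u hu).1
  rcases j.eq_zero_or_pos with rfl | hj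
  · exact ⟨u, hu, .nil, by simp⟩
  obtain ⟨p, hp⟩ :=
    (Reachable.of_dist_ne_zero (by omega : G.dist u a ≠ 0)).exists_walk_length_eq_dist
  refine ⟨a, ha, p, fun q hq hqu k hkm hqk => ?_⟩
  calc k ≤ G.dist q a := (hL.2 k hkm q hqk).2 a ha
    _ ≤ (p.dropUntil q hq).length := dist_le _
    _ < p.length := Walk.length_dropUntil_lt_length hq hqu
    _ = j := hp.trans hua

end IsBFSLayering

theorem up_neighbours_general {V X : Type*} [Fintype V] (H : SimpleGraph V)
    (T : SimpleGraph X) (hT : T.IsTree) (D : TreeDecomp H T) (t : ℕ)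
    (hwidth : ∀ x, (D.bag x).ncard ≤ t + 1) (hmax : EdgeMaximal D)
    (r : X) (L : ℕ → Set V) (m : ℕ) (hL : IsBFSLayering H L m) (hL0 : L 0 = D.bag r)
    (i : ℕ) (hi1 : 1 ≤ i)
    (C : (H.induce (⋃ j ∈ Finset.Icc i m, L j)).ConnectedComponent) :
    {u ∈ L (i - 1) | ∃ (w : V) (hw : w ∈ ⋃ j ∈ Finset.Icc i m, L j),
        (H.induce (⋃ j ∈ Finset.Icc i m, L j)).connectedComponentMk ⟨w, hw⟩ = C ∧
          H.Adj u w}.ncard ≤ t := by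
  obtain ⟨x, ⟨_, hw₀x, ⟨w₀, hw₀J⟩, -, rfl⟩, hsep⟩ :=
    D.exists_bag_separating hT C.connected_induce_image_val_supp r
  obtain ⟨k₀, ⟨hik₀, hk₀m⟩, hw₀k₀⟩ : ∃ k, (i ≤ k ∧ k ≤ m) ∧ w₀ ∈ L k := by
    simpa only [Set.mem_iUnion, Finset.mem_Icc, exists_prop] using hw₀J
  have bag_above : ∀ q ∈ D.bag x, ∀ k ≤ m, q ∈ L k → i ≤ k + 1 := by
    intro q hq k hkm hqk
    rcases eq_or_ne q w₀ with rfl | hne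
    · have := hL.eq_of_mem hqk hkm hw₀k₀ hk₀m
      omega
    · have := hL.le_succ_of_adj (hmax x q hq w₀ hw₀x hne) hqk hkm hw₀k₀ hk₀m
      omega
  refine (Set.ncard_le_ncard (t := D.bag x \ {w₀}) ?_ (Set.toFinite _)).trans ?_
  · rintro u ⟨hu, w, hwJ, hwC, huw⟩
    obtain ⟨a, ha, p, hp⟩ := hL.exists_walk_to_layer_zero (by omega : i - 1 ≤ m) hu
    obtain ⟨q, hqp, hqx⟩ := hsep ⟨⟨w, hwJ⟩, hwC, rfl⟩ huw a (hL0 ▸ ha) p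
    obtain ⟨k, hkm, hqk⟩ := (hL.1 q).exists
    obtain rfl : q = u := by
      by_contra hqu
      have := hp q hqp hqu k hkm hqk
      have := bag_above q hqx k hkm hqk
      omega
    refine ⟨hqx, fun (hqw₀ : q = w₀) => ?_⟩
    have := hL.eq_of_mem hu (by omega) (hqw₀ ▸ hw₀k₀) hk₀m
    omega
  · have := hwidth x
    rw [Set.ncard_sdiff_singleton_of_mem hw₀x]
    omega

/-- For a connected graph `H` edge-maximal with respect to a width-`t` rooted tree
decomposition, with BFS layering starting at the root bag, each component `C` of the
graph induced on layers `i,…,m` has at most `t` neighbours in layer `i−1`. -/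
theorem up_neighbours {V X : Type*} [Fintype V] (H : SimpleGraph V) (hconn : H.Connected)
    (T : SimpleGraph X) (hT : T.IsTree) (D : TreeDecomp H T) (t : ℕ)
    (hwidth : ∀ x, (D.bag x).ncard ≤ t + 1) (hmax : EdgeMaximal D)
    (r : X) (L : ℕ → Set V) (m : ℕ) (hL : IsBFSLayering H L m) (hL0 : L 0 = D.bag r)
    (i : ℕ) (hi1 : 1 ≤ i) (him : i ≤ m)
    (C : (H.induce (⋃ j ∈ Finset.Icc i m, L j)).ConnectedComponent) :
    {u ∈ L (i - 1) | ∃ (w : V) (hw : w ∈ ⋃ j ∈ Finset.Icc i m, L j),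
        (H.induce (⋃ j ∈ Finset.Icc i m, L j)).connectedComponentMk ⟨w, hw⟩ = C ∧
          H.Adj u w}.ncard ≤ t :=
  up_neighbours_general H T hT D t hwidth hmax r L m hL hL0 i hi1 C
end
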